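/- arXiv:2509.23929 — 5 statements merged into one kernel-verified Lean document; each statement's English description precedes it below -/
import Mathlib

section
/- For every positive integer k there exists an integer n > k such that for every 2-coloring (say red/blue) of the edges of the Erdős–Hajnal shift graph G_n, there is a subgraph of G_n all of whose edges receive the same color and which is isomorphic to the Erdős–Hajnal shift graph G_k. (In other words, the sequence {G_k} of Erdős–Hajnal shift graphs is a Ramsey sequence.) -/
/-- Vertices of the Erdős–Hajnal shift graph `G k`: pairs `(i, j)` of integers with
`1 ≤ i < j ≤ 2 ^ k + 1`. -/
def EHVert (k : ℕ) : Type :=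
  {p : ℕ × ℕ // 1 ≤ p.1 ∧ p.1 < p.2 ∧ p.2 ≤ 2 ^ k + 1}

/-- The Erdős–Hajnal shift graph `G k`: vertices `(i, j)` and `(l, m)` are adjacent
iff `j = l` or `m = i`. -/
def EHShift (k : ℕ) : SimpleGraph (EHVert k) where
  Adj p q := p.val.2 = q.val.1 ∨ q.val.2 = p.val.1
  symm := ⟨fun _ _ h => h.symm⟩
  loopless := ⟨by rintro ⟨⟨i, j⟩, h1, h2, h3⟩ h; dsimp at h; omega⟩

/-- `C`-monochromatic copy of `G` in `H` (as a subgraph): an injective map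
preserving adjacency such that all images of edges of `G` receive the same color. -/
def HasMonoCopy {V W : Type*} (G : SimpleGraph V) (H : SimpleGraph W)
    (C : Sym2 W → Bool) : Prop :=
  ∃ f : V → W, Function.Injective f ∧ (∀ u v, G.Adj u v → H.Adj (f u) (f v)) ∧
    ∃ c : Bool, ∀ u v, G.Adj u v → C s(f u, f v) = c

/-!
An edge of `G n` is a pair `(x, y), (y, z)` with `x < y < z`, so a red/blue colouring of the edges
of `G n` is a colouring of the `3`-element subsets of `{1, …, 2 ^ n + 1}`. By the finite Ramsey
theorem for triples, once `2 ^ n + 1` is large enough there is a set `T` of `2 ^ k + 1` points all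
of whose triples get the same colour, and the increasing enumeration of `T` maps `G k` onto a
monochromatic copy inside `G n`.

Ramsey's theorem for `r + 1`-sets is proved from the one for `r`-sets via end-homogeneous sets:
sets on which the colour of `A ∪ {y}` does not depend on `y > max A`.
-/

open Finset

section Homogeneous

variable {α κ : Type*}

def IsHomogeneous (c : Finset α → κ) (r : ℕ) (T : Finset α) : Prop :=
  ∃ b, ∀ A ⊆ T, #A = r → c A = b

theorem IsHomogeneous.mono {c : Finset α → κ} {r : ℕ} {S T : Finset α}
    (h : IsHomogeneous c r T) (hST : S ⊆ T) : IsHomogeneous c r S :=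
  let ⟨b, hb⟩ := h
  ⟨b, fun A hA => hb A (hA.trans hST)⟩

variable (α κ) in
def HasRamseyNumbers (r : ℕ) : Prop :=
  ∀ m, ∃ N, ∀ (c : Finset α → κ) (S : Finset α), N ≤ #S →
    ∃ T ⊆ S, #T = m ∧ IsHomogeneous c r T

theorem hasRamseyNumbers_one [Fintype κ] : HasRamseyNumbers α κ 1 := by
  classical
  intro m
  refine ⟨Fintype.card κ * m, fun c S hS => ?_⟩
  obtain ⟨b, -, hb⟩ := exists_le_card_fiber_of_mul_le_card_of_maps_to (t := univ)
    (f := fun x => c {x}) (fun _ _ => mem_univ _) ⟨c ∅, mem_univ _⟩ (by simpa using hS)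
  obtain ⟨T, hTS, hT⟩ := exists_subset_card_eq hb
  refine ⟨T, hTS.trans (filter_subset _ _), hT, b, fun A hA hA1 => ?_⟩
  obtain ⟨x, rfl⟩ := card_eq_one.1 hA1
  exact (mem_filter.1 (hTS (hA (mem_singleton_self x)))).2

end Homogeneous

section EndHomogeneous

variable {α κ : Type*} [LinearOrder α] {c : Finset α → κ} {r : ℕ}

def IsEndHomogeneous (c : Finset α → κ) (r : ℕ) (T : Finset α) : Prop :=
  ∀ A ⊆ T, #A = r → ∀ y ∈ T, ∀ z ∈ T, (∀ a ∈ A, a < y) → (∀ a ∈ A, a < z) →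
    c (insert y A) = c (insert z A)

theorem IsEndHomogeneous.insert_of_lt {T : Finset α} {v : α} (hr : 1 ≤ r)
    (hT : IsEndHomogeneous c r T) (hvT : ∀ x ∈ T, v < x)
    (hv : IsHomogeneous (fun B => c (insert v B)) r T) :
    IsEndHomogeneous c r (insert v T) := by
  obtain ⟨b, hb⟩ := hv
  have mem_of_gt : ∀ w ∈ insert v T, ∀ a ∈ insert v T, a < w → w ∈ T := by
    intro w hw a ha haw
    rcases mem_insert.1 hw with rfl | hw
    · rcases mem_insert.1 ha with rfl | ha
      · exact absurd haw (lt_irrefl _)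
      · exact absurd haw (hvT a ha).not_gt
    · exact hw
  intro A hA hAr y hy z hz hAy hAz
  by_cases hvA : v ∈ A
  · have hA' : A.erase v ⊆ T := fun a ha => by
      rcases mem_insert.1 (hA (mem_of_mem_erase ha)) with rfl | haT
      · exact absurd rfl (ne_of_mem_erase ha)
      · exact haT
    have key : ∀ w ∈ insert v T, (∀ a ∈ A, a < w) → c (insert w A) = b := by
      intro w hw hAw
      have hwT := mem_of_gt w hw v (mem_insert_self v T) (hAw v hvA)
      have hwA : w ∉ A.erase v := fun h => lt_irrefl w (hAw w (mem_of_mem_erase h))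
      rw [← insert_erase hvA, insert_comm]
      refine hb _ (insert_subset hwT hA') ?_
      rw [card_insert_of_notMem hwA, card_erase_of_mem hvA]
      omega
    rw [key y hy hAy, key z hz hAz]
  · have hAT : A ⊆ T := (subset_insert_iff_of_notMem hvA).1 hA
    obtain ⟨a, ha⟩ := card_pos.1 (show 0 < #A by omega)
    exact hT A hAT hAr y (mem_of_gt y hy a (hA ha) (hAy a ha)) z
      (mem_of_gt z hz a (hA ha) (hAz a ha)) hAy hAz

theorem exists_isEndHomogeneous (hr : 1 ≤ r) (h : HasRamseyNumbers α κ r) (t : ℕ) :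
    ∃ N, ∀ (c : Finset α → κ) (S : Finset α), N ≤ #S →
      ∃ T ⊆ S, #T = t ∧ IsEndHomogeneous c r T := by
  induction t with
  | zero => exact ⟨0, fun _ _ _ => ⟨∅, empty_subset _, card_empty,
      fun _ _ _ y hy => absurd hy (notMem_empty y)⟩⟩
  | succ t ih =>
    obtain ⟨N, hN⟩ := ih
    obtain ⟨M, hM⟩ := h N
    refine ⟨M + 1, fun c S hS => ?_⟩
    have hne : S.Nonempty := card_pos.1 (by omega)
    set v := S.min' hne
    obtain ⟨U, hUS, hUcard, hU⟩ := hM (fun B => c (insert v B)) (S.erase v)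
      (by rw [card_erase_of_mem (min'_mem S hne)]; omega)
    obtain ⟨T, hTU, hTcard, hT⟩ := hN c U hUcard.ge
    have hvT : ∀ x ∈ T, v < x := fun x hx => S.min'_lt_of_mem_erase_min' hne (hUS (hTU hx))
    refine ⟨insert v T, insert_subset (min'_mem S hne) (hTU.trans (hUS.trans (erase_subset _ _))),
      ?_, hT.insert_of_lt hr hvT (hU.mono hTU)⟩
    rw [card_insert_of_notMem (fun hv => lt_irrefl v (hvT v hv)), hTcard]

theorem IsEndHomogeneous.isHomogeneous_succ {T T₀ : Finset α} {M : α}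
    (hT : IsEndHomogeneous c r T) (hT₀ : T₀ ⊆ T) (hM : M ∈ T) (hlt : ∀ x ∈ T₀, x < M)
    (h : IsHomogeneous (fun A => c (insert M A)) r T₀) : IsHomogeneous c (r + 1) T₀ := by
  obtain ⟨b, hb⟩ := h
  refine ⟨b, fun B hB hBr => ?_⟩
  have hne : B.Nonempty := card_pos.1 (by omega)
  have hy := max'_mem B hne
  have hA : B.erase (B.max' hne) ⊆ T₀ := (erase_subset _ _).trans hB
  have hAr : #(B.erase (B.max' hne)) = r := by rw [card_erase_of_mem hy]; omega
  rw [← insert_erase hy, hT _ (hA.trans hT₀) hAr _ (hT₀ (hB hy)) M hM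
    (fun a ha => B.lt_max'_of_mem_erase_max' hne ha) (fun a ha => hlt a (hA ha))]
  exact hb _ hA hAr

theorem HasRamseyNumbers.succ (hr : 1 ≤ r) (h : HasRamseyNumbers α κ r) :
    HasRamseyNumbers α κ (r + 1) := by
  intro m
  obtain ⟨N, hN⟩ := h m
  obtain ⟨M, hM⟩ := exists_isEndHomogeneous hr h (N + 1)
  refine ⟨M, fun c S hS => ?_⟩
  obtain ⟨T, hTS, hTcard, hT⟩ := hM c S hS
  have hne : T.Nonempty := card_pos.1 (by omega)
  obtain ⟨T₀, hT₀, hT₀card, hhom⟩ := hN (fun A => c (insert (T.max' hne) A))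
    (T.erase (T.max' hne)) (by rw [card_erase_of_mem (max'_mem T hne)]; omega)
  exact ⟨T₀, hT₀.trans ((erase_subset _ _).trans hTS), hT₀card,
    hT.isHomogeneous_succ (hT₀.trans (erase_subset _ _)) (max'_mem T hne)
      (fun x hx => T.lt_max'_of_mem_erase_max' hne (hT₀ hx)) hhom⟩

theorem hasRamseyNumbers [Fintype κ] (hr : 1 ≤ r) : HasRamseyNumbers α κ r := by
  induction r, hr using Nat.le_induction with
  | base => exact hasRamseyNumbers_one
  | succ r hr ih => exact ih.succ hr

end EndHomogeneous

section ShiftGraph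

variable {k n : ℕ}

theorem card_eq_three_of_lt {x y z : ℕ} (hxy : x < y) (hyz : y < z) : #{x, y, z} = 3 :=
  card_eq_three.2 ⟨x, y, z, hxy.ne, (hxy.trans hyz).ne, hyz.ne, rfl⟩

/-- The colour of the edge `(x, y), (y, z)` of `G n` for `x < y < z`; junk value `false` on sets
that are not such triples. -/
def tripleColoring (C : Sym2 (EHVert n) → Bool) (A : Finset ℕ) : Bool :=
  if h : #A = 3 then
    let e := A.orderEmbOfFin h
    if hb : 1 ≤ e 0 ∧ e 2 ≤ 2 ^ n + 1 then
      C s(⟨(e 0, e 1), hb.1, e.strictMono (by decide), (e.strictMono (by decide)).le.trans hb.2⟩,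
        ⟨(e 1, e 2), hb.1.trans (e.strictMono (by decide)).le, e.strictMono (by decide), hb.2⟩)
    else false
  else false

theorem tripleColoring_eq (C : Sym2 (EHVert n) → Bool) {u v : EHVert n}
    (huv : u.val.2 = v.val.1) : tripleColoring C {u.val.1, u.val.2, v.val.2} = C s(u, v) := by
  revert huv
  obtain ⟨⟨x, y⟩, hx, hxy, -⟩ := u
  obtain ⟨⟨y', z⟩, -, hyz, hz⟩ := v
  rintro (rfl : y = y')
  have h3 := card_eq_three_of_lt hxy hyz
  have he : ⇑(({x, y, z} : Finset ℕ).orderEmbOfFin h3) = ![x, y, z] := by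
    refine (orderEmbOfFin_unique h3 (fun i => ?_) ?_).symm
    · fin_cases i <;> simp
    · exact Fin.strictMono_iff_lt_succ.2 fun i => by fin_cases i <;> simpa
  unfold tripleColoring
  simp [h3, he, hx, hz]

/-- The copy of `G k` in `G n` given by an increasing map `e` from `{1, …, 2 ^ k + 1}` (shifted
to start at `0`) into `{1, …, 2 ^ n + 1}`. -/
def ehVertMap (e : Fin (2 ^ k + 1) ↪o ℕ) (he : ∀ i, e i ∈ Icc 1 (2 ^ n + 1)) (p : EHVert k) :
    EHVert n :=
  ⟨(e ⟨p.val.1 - 1, by have := p.prop; omega⟩, e ⟨p.val.2 - 1, by have := p.prop; omega⟩),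
    (mem_Icc.1 (he _)).1, e.strictMono (by have := p.prop; simp only [Fin.lt_def]; omega),
    (mem_Icc.1 (he _)).2⟩

theorem ehVertMap_injective (e : Fin (2 ^ k + 1) ↪o ℕ) (he : ∀ i, e i ∈ Icc 1 (2 ^ n + 1)) :
    Function.Injective (ehVertMap e he) := by
  intro p q h
  obtain ⟨h₁, h₂⟩ := Prod.ext_iff.1 (Subtype.ext_iff.1 h)
  simp only [ehVertMap, EmbeddingLike.apply_eq_iff_eq, Fin.mk.injEq] at h₁ h₂
  have := p.prop
  have := q.prop
  exact Subtype.ext (Prod.ext (by omega) (by omega))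

theorem ehVertMap_adj (e : Fin (2 ^ k + 1) ↪o ℕ) (he : ∀ i, e i ∈ Icc 1 (2 ^ n + 1))
    {p q : EHVert k} (h : (EHShift k).Adj p q) :
    (EHShift n).Adj (ehVertMap e he p) (ehVertMap e he q) := by
  rcases h with h | h
  · exact Or.inl (by simp only [ehVertMap, h])
  · exact Or.inr (by simp only [ehVertMap, h])

theorem hasMonoCopy_of_isHomogeneous (C : Sym2 (EHVert n) → Bool) {T : Finset ℕ}
    (hT : T ⊆ Icc 1 (2 ^ n + 1)) (hcard : #T = 2 ^ k + 1)
    (hhom : IsHomogeneous (tripleColoring C) 3 T) : HasMonoCopy (EHShift k) (EHShift n) C := by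
  set e := T.orderEmbOfFin hcard
  have he : ∀ i, e i ∈ Icc 1 (2 ^ n + 1) := fun i => hT (T.orderEmbOfFin_mem hcard i)
  obtain ⟨b, hb⟩ := hhom
  have hedge : ∀ p q : EHVert k, p.val.2 = q.val.1 →
      C s(ehVertMap e he p, ehVertMap e he q) = b := by
    intro p q hpq
    have hpq' : (ehVertMap e he p).val.2 = (ehVertMap e he q).val.1 := by
      simp only [ehVertMap, hpq]
    rw [← tripleColoring_eq C hpq']
    refine hb _ ?_ (card_eq_three_of_lt (ehVertMap e he p).prop.2.1
      (hpq' ▸ (ehVertMap e he q).prop.2.1))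
    simp only [insert_subset_iff, singleton_subset_iff]
    exact ⟨T.orderEmbOfFin_mem hcard _, T.orderEmbOfFin_mem hcard _, T.orderEmbOfFin_mem hcard _⟩
  refine ⟨ehVertMap e he, ehVertMap_injective e he, fun p q => ehVertMap_adj e he, b, ?_⟩
  rintro p q (h | h)
  · exact hedge p q h
  · rw [Sym2.eq_swap]
    exact hedge q p h

end ShiftGraph

theorem ehShift_ramsey_sequence_general (k : ℕ) :
    ∃ n : ℕ, n > k ∧
      ∀ C : Sym2 (EHVert n) → Bool, HasMonoCopy (EHShift k) (EHShift n) C := by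
  obtain ⟨N, hN⟩ := hasRamseyNumbers (α := ℕ) (κ := Bool) (r := 3) (by norm_num) (2 ^ k + 1)
  refine ⟨max (k + 1) N, by omega, fun C => ?_⟩
  have hS : N ≤ #(Icc 1 (2 ^ max (k + 1) N + 1)) := by
    have := Nat.lt_two_pow_self (n := max (k + 1) N)
    rw [Nat.card_Icc]
    omega
  obtain ⟨T, hTS, hTcard, hT⟩ := hN (tripleColoring C) _ hS
  exact hasMonoCopy_of_isHomogeneous C hTS hTcard hT

/-- The sequence of Erdős–Hajnal shift graphs is a Ramsey sequence: for every positive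
integer `k` there is `n > k` such that every red-blue edge coloring of `G n` contains a
monochromatic subgraph isomorphic to `G k`. -/
theorem ehShift_ramsey_sequence (k : ℕ) (hk : 1 ≤ k) :
    ∃ n : ℕ, n > k ∧
      ∀ C : Sym2 (EHVert n) → Bool, HasMonoCopy (EHShift k) (EHShift n) C :=
  ehShift_ramsey_sequence_general k
end

section
/- Let t be a positive integer and let n = 2^{t+1}. For every 2-coloring (red/blue) of the edges of the Erdős–Hajnal shift graph G_n, there exist a color c and a set W ⊆ {2, 3, …, 2^n + 1} with |W| = 2^t such that: (1) the subgraph of G_n induced by the vertex set { (a,b) : a < b and a, b ∈ {1} ∪ W } is isomorphic to G_t, and (2) every edge of this induced subgraph of the form (1,a)(a,b) with a, b ∈ W receives the color c. -/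
/-! Colour each pair `x < y` of `{2, …, 2 ^ n + 1}` by the colour of the edge `(1, x)(x, y)`.
As `n = 2 ^ t + 2 ^ t`, the Erdős–Szekeres bound `R(2 ^ t, 2 ^ t) ≤ 2 ^ n` gives a monochromatic
set `W` of size `2 ^ t`. The shift graph on the pairs of a linear order depends only on its order
type, so the pairs from the `2 ^ t + 1` points of `{1} ∪ W` span a copy of `G t`. -/

open Finset

section Ramsey

variable {α : Type*}

lemma exists_pow_le_card_filter_eq (f : α → Bool) (s : Finset α) {m : ℕ}
    (hs : 2 ^ (m + 1) ≤ #s + 1) : ∃ c, 2 ^ m ≤ #{x ∈ s | f x = c} := by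
  by_contra! h
  have hsplit := card_filter_add_card_filter_not (s := s) (fun x => f x = true)
  simp only [Bool.not_eq_true] at hsplit
  have := h true
  have := h false
  rw [pow_succ] at hs
  omega

variable [LinearOrder α]

def IsMonochromatic (χ : α → α → Bool) (c : Bool) (W : Finset α) : Prop :=
  ∀ x ∈ W, ∀ y ∈ W, x < y → χ x y = c

lemma IsMonochromatic.empty (χ : α → α → Bool) (c : Bool) : IsMonochromatic χ c ∅ := by
  simp [IsMonochromatic]

lemma IsMonochromatic.insert {χ : α → α → Bool} {c : Bool} {W : Finset α} {a : α}
    (hW : IsMonochromatic χ c W) (ha : ∀ x ∈ W, a < x ∧ χ a x = c) :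
    IsMonochromatic χ c (insert a W) := by
  intro x hx y hy hxy
  rcases mem_insert.1 hx with rfl | hxW <;> rcases mem_insert.1 hy with rfl | hyW
  · exact absurd hxy (lt_irrefl _)
  · exact (ha y hyW).2
  · exact absurd ((ha x hxW).1.trans hxy) (lt_irrefl _)
  · exact hW x hxW y hyW hxy

/-- Erdős–Szekeres bound for the two-colour Ramsey numbers of ordered pairs:
`R(r true, r false) ≤ 2 ^ (r true + r false)`. -/
theorem exists_isMonochromatic (χ : α → α → Bool) (r : Bool → ℕ) (A : Finset α)
    (hA : 2 ^ (r true + r false) ≤ #A) :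
    ∃ c, ∃ W ⊆ A, #W = r c ∧ IsMonochromatic χ c W := by
  obtain ⟨N, hN⟩ : ∃ N, r true + r false = N := ⟨_, rfl⟩
  induction N generalizing r A with
  | zero => exact ⟨true, ∅, empty_subset A, by rw [card_empty]; omega, .empty χ true⟩
  | succ m ih =>
    by_cases h0 : ∃ c, r c = 0
    · obtain ⟨c, hc⟩ := h0
      exact ⟨c, ∅, empty_subset A, hc.symm, .empty χ c⟩
    push Not at h0
    have hAne : A.Nonempty := card_pos.1 (lt_of_lt_of_le (Nat.two_pow_pos _) hA)
    set a := A.min' hAne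
    have haA : a ∈ A := A.min'_mem hAne
    obtain ⟨c, hc⟩ := exists_pow_le_card_filter_eq (χ a) (A.erase a) (m := m)
      (by rw [card_erase_add_one haA, ← hN]; exact hA)
    set r' := Function.update r c (r c - 1)
    have hr' : r' true + r' false = m := by
      have := h0 c
      cases c <;> simp [r'] <;> omega
    obtain ⟨c', W, hWB, hWcard, hWmono⟩ := ih r' _ (hr' ▸ hc) hr'
    have hWA : W ⊆ A.erase a := hWB.trans (filter_subset _ _)
    by_cases hcc : c' = c
    · subst hcc
      have haW : a ∉ W := fun h => (mem_erase.1 (hWA h)).1 rfl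
      refine ⟨c', insert a W, insert_subset haA (hWA.trans (erase_subset a A)), ?_, ?_⟩
      · rw [card_insert_of_notMem haW, hWcard]
        have := h0 c'
        simp only [r', Function.update_self]
        omega
      · refine hWmono.insert fun x hx => ⟨?_, (mem_filter.1 (hWB hx)).2⟩
        obtain ⟨hxa, hxA⟩ := mem_erase.1 (hWA hx)
        exact lt_of_le_of_ne (A.min'_le x hxA) (Ne.symm hxa)
    · exact ⟨c', W, hWA.trans (erase_subset a A), by simp [hWcard, r', hcc], hWmono⟩

end Ramsey

section ShiftGraph

def shiftGraph (α : Type*) [Preorder α] : SimpleGraph {p : α × α // p.1 < p.2} where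
  Adj p q := p.1.2 = q.1.1 ∨ q.1.2 = p.1.1
  symm := ⟨fun _ _ h => h.symm⟩
  loopless := ⟨fun p h => by rcases h with h | h <;> exact lt_irrefl _ (h ▸ p.2)⟩

variable {α β : Type*} [Preorder α] [Preorder β]

def shiftGraphCongr (e : α ≃o β) : shiftGraph α ≃g shiftGraph β where
  toFun p := ⟨(e p.1.1, e p.1.2), e.strictMono p.2⟩
  invFun q := ⟨(e.symm q.1.1, e.symm q.1.2), e.symm.strictMono q.2⟩
  left_inv p := by simp
  right_inv q := by simp
  map_rel_iff' := by simp [shiftGraph]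

end ShiftGraph

def ehShiftIsoShiftGraph (k : ℕ) : EHShift k ≃g shiftGraph (Icc 1 (2 ^ k + 1)) where
  toFun p := ⟨(⟨p.1.1, mem_Icc.2 ⟨p.2.1, p.2.2.1.le.trans p.2.2.2⟩⟩,
    ⟨p.1.2, mem_Icc.2 ⟨p.2.1.trans p.2.2.1.le, p.2.2.2⟩⟩), p.2.2.1⟩
  invFun q := ⟨(q.1.1, q.1.2), (mem_Icc.1 q.1.1.2).1, q.2, (mem_Icc.1 q.1.2.2).2⟩
  left_inv _ := rfl
  right_inv _ := rfl
  map_rel_iff' := or_congr Subtype.mk_eq_mk Subtype.mk_eq_mk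

def inducePairsIsoShiftGraph {n : ℕ} {s : Finset ℕ} (hs : s ⊆ Icc 1 (2 ^ n + 1)) :
    (EHShift n).induce {p | p.val.1 ∈ (s : Set ℕ) ∧ p.val.2 ∈ (s : Set ℕ)} ≃g shiftGraph s where
  toFun p := ⟨(⟨p.1.1.1, p.2.1⟩, ⟨p.1.1.2, p.2.2⟩), p.1.2.2.1⟩
  invFun q := ⟨⟨(q.1.1, q.1.2), (mem_Icc.1 (hs q.1.1.2)).1, q.2, (mem_Icc.1 (hs q.1.2.2)).2⟩,
    q.1.1.2, q.1.2.2⟩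
  left_inv _ := rfl
  right_inv _ := rfl
  map_rel_iff' := or_congr Subtype.mk_eq_mk Subtype.mk_eq_mk

theorem nonempty_induce_iso_ehShift {n t : ℕ} {s : Finset ℕ} (hs : s ⊆ Icc 1 (2 ^ n + 1))
    (hcard : #s = 2 ^ t + 1) :
    Nonempty ((EHShift n).induce {p | p.val.1 ∈ (s : Set ℕ) ∧ p.val.2 ∈ (s : Set ℕ)} ≃g
      EHShift t) :=
  ⟨(inducePairsIsoShiftGraph hs).trans <| (shiftGraphCongr <|
    (s.orderIsoOfFin hcard).symm.trans ((Icc 1 (2 ^ t + 1)).orderIsoOfFin (by simp))).trans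
      (ehShiftIsoShiftGraph t).symm⟩

/-- The colour of the edge `(1, x)(x, y)` of `G n`, and junk outside `2 ≤ x < y ≤ 2 ^ n + 1`. -/
def starColoring {n : ℕ} (C : Sym2 (EHVert n) → Bool) (x y : ℕ) : Bool :=
  if h : 2 ≤ x ∧ x < y ∧ y ≤ 2 ^ n + 1 then
    C s((⟨(1, x), le_rfl, h.1, h.2.1.le.trans h.2.2⟩ : EHVert n),
      (⟨(x, y), one_le_two.trans h.1, h.2.1, h.2.2⟩ : EHVert n))
  else true

lemma starColoring_eq {n : ℕ} (C : Sym2 (EHVert n) → Bool) {a b : ℕ} (hab : a < b)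
    (ha : a ∈ Icc 2 (2 ^ n + 1)) (hb : b ∈ Icc 2 (2 ^ n + 1)) {p q : EHVert n}
    (hp : p.val = (1, a)) (hq : q.val = (a, b)) : starColoring C a b = C s(p, q) := by
  rw [mem_Icc] at ha hb
  rw [starColoring, dif_pos ⟨ha.1, hab, hb.2⟩]
  obtain ⟨_, _⟩ := p
  obtain ⟨_, _⟩ := q
  subst hp hq
  rfl

theorem ehShift_mono_star_lemma_general (t : ℕ)
    (C : Sym2 (EHVert (2 ^ (t + 1))) → Bool) :
    ∃ (c : Bool) (W : Finset ℕ),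
      W ⊆ Finset.Icc 2 (2 ^ (2 ^ (t + 1)) + 1) ∧ W.card = 2 ^ t ∧
      Nonempty
        ((SimpleGraph.induce
            {p : EHVert (2 ^ (t + 1)) |
              p.val.1 ∈ insert 1 (W : Set ℕ) ∧ p.val.2 ∈ insert 1 (W : Set ℕ)}
            (EHShift (2 ^ (t + 1)))) ≃g EHShift t) ∧
      ∀ a b, a ∈ W → b ∈ W → a < b →
        ∀ p q : EHVert (2 ^ (t + 1)), p.val = (1, a) → q.val = (a, b) →
          C s(p, q) = c := by
  obtain ⟨c, W, hWA, hWcard, hWmono⟩ := exists_isMonochromatic (starColoring C)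
    (fun _ => 2 ^ t) (Icc 2 (2 ^ (2 ^ (t + 1)) + 1)) (by simp [← two_mul, ← pow_succ'])
  have h1W : 1 ∉ W := fun h => by simpa using hWA h
  have hsub : insert 1 W ⊆ Icc 1 (2 ^ (2 ^ (t + 1)) + 1) :=
    insert_subset (by simp) (hWA.trans (Icc_subset_Icc_left one_le_two))
  refine ⟨c, W, hWA, hWcard, ?_, fun a b ha hb hab p q hp hq => ?_⟩
  · have := nonempty_induce_iso_ehShift hsub (by rw [card_insert_of_notMem h1W, hWcard])
    rwa [coe_insert] at this
  · rw [← starColoring_eq C hab (hWA ha) (hWA hb) hp hq]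
    exact hWmono a ha b hb hab

/-- Lemma 1: for `n = 2 ^ (t + 1)` and any red-blue edge coloring of `G n`, there exist a color
`c` and a set `W ⊆ {2, …, 2 ^ n + 1}` of size `2 ^ t` such that the subgraph of `G n` induced by
the vertices with both endpoints in `{1} ∪ W` is isomorphic to `G t`, and every edge of the form
`(1, a)(a, b)` with `a, b ∈ W` receives the color `c`. -/
theorem ehShift_mono_star_lemma (t : ℕ) (ht : 1 ≤ t)
    (C : Sym2 (EHVert (2 ^ (t + 1))) → Bool) :
    ∃ (c : Bool) (W : Finset ℕ),
      W ⊆ Finset.Icc 2 (2 ^ (2 ^ (t + 1)) + 1) ∧ W.card = 2 ^ t ∧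
      Nonempty
        ((SimpleGraph.induce
            {p : EHVert (2 ^ (t + 1)) |
              p.val.1 ∈ insert 1 (W : Set ℕ) ∧ p.val.2 ∈ insert 1 (W : Set ℕ)}
            (EHShift (2 ^ (t + 1)))) ≃g EHShift t) ∧
      ∀ a b, a ∈ W → b ∈ W → a < b →
        ∀ p q : EHVert (2 ^ (t + 1)), p.val = (1, a) → q.val = (a, b) →
          C s(p, q) = c :=
  ehShift_mono_star_lemma_general t C
end

section
/- There exists an ascending sequence of graphs {G_k} that is a Ramsey sequence, whose clique numbers are bounded (indeed ω(G_k) = 2 for all k) and whose chromatic numbers tend to infinity (indeed χ(G_k) = k + 1 for all k). Concretely, the sequence of Erdős–Hajnal shift graphs has all of these properties: for every k, G_k is isomorphic to a proper subgraph of G_{k+1}; ω(G_k) = 2; χ(G_k) = k + 1; and for every k there exists n > k such that every red-blue coloring of the edges of G_n contains a monochromatic subgraph isomorphic to G_k. -/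
/-!
Colouring `(i, j)` by the leading binary digit in which `i - 1` and `j - 1` differ is proper with
`k + 1` colours; conversely, in a proper `c`-colouring the sets of colours carried by the vertices
`(i, _)` are pairwise distinct, so `2 ^ k + 1 ≤ 2 ^ c`.

A strictly increasing relabelling of `1, …, 2 ^ k + 1` inside `1, …, 2 ^ n + 1` embeds `G k` into
`G n`, and the edges `(a, b) – (b, c)` of `G n` are in bijection with the triples `a < b < c`, so a
monochromatic copy of `G k` comes from Ramsey's theorem for triples. Both it and the pair case are
proved the Erdős–Rado way: repeatedly split off the least point and shrink the rest (by pigeonhole,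
resp. by the pair case) until the colour of a tuple depends only on its least point; a last
pigeonhole over these colours finishes.
-/

open Finset

section Ramsey

variable {α : Type*} [LinearOrder α]

/-- `good v A e` says that every colouring that starts at `v` and continues inside `A` has colour
`e`; `step` is the Ramsey statement one dimension down, which produces large such `A`. -/
theorem exists_endHomogeneous_subset (good : α → Finset α → Bool → Prop) (f : ℕ → ℕ)
    (anti : ∀ v A B e, B ⊆ A → good v A e → good v B e)
    (step : ∀ M v (T : Finset α), f M ≤ #T → ∃ A ⊆ T, M ≤ #A ∧ ∃ e, good v A e)
    (t : ℕ) (S : Finset α) (hS : (fun M => f M + 1)^[t] 0 ≤ #S) :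
    ∃ X ⊆ S, #X = t ∧ ∃ e : α → Bool, ∀ x ∈ X, good x {y ∈ X | x < y} (e x) := by
  classical
  induction t generalizing S with
  | zero => exact ⟨∅, empty_subset S, rfl, fun _ => true, by simp⟩
  | succ t ih =>
    rw [Function.iterate_succ_apply'] at hS
    have hne : S.Nonempty := card_pos.1 (by omega)
    set v := S.min' hne
    obtain ⟨A, hAS, hA, e₀, hvA⟩ := step ((fun M => f M + 1)^[t] 0) v (S.erase v)
      (by rw [card_erase_of_mem (S.min'_mem hne)]; omega)
    obtain ⟨X, hXA, hX, e, hXe⟩ := ih A hA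
    have hvX : ∀ x ∈ X, v < x := fun x hx => S.min'_lt_of_mem_erase_min' hne (hAS (hXA hx))
    have hvX' : v ∉ X := fun h => (hvX v h).false
    refine ⟨insert v X, insert_subset (S.min'_mem hne) (hXA.trans (hAS.trans (erase_subset _ _))),
      by rw [card_insert_of_notMem hvX', hX], Function.update e v e₀, fun x hx => ?_⟩
    rcases mem_insert.1 hx with rfl | hx
    · refine (Function.update_self _ e₀ e).symm ▸ anti _ _ _ _ (fun y hy => ?_) hvA
      obtain ⟨hy, hxy⟩ := mem_filter.1 hy
      exact hXA ((mem_insert.1 hy).resolve_left hxy.ne')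
    · rw [Function.update_of_ne (hvX x hx).ne']
      refine anti _ _ _ _ (fun y hy => ?_) (hXe x hx)
      obtain ⟨hy, hxy⟩ := mem_filter.1 hy
      exact mem_filter.2 ⟨(mem_insert.1 hy).resolve_left ((hvX x hx).trans hxy).ne', hxy⟩

theorem exists_homogeneous_subset (good : α → Finset α → Bool → Prop) (f : ℕ → ℕ)
    (anti : ∀ v A B e, B ⊆ A → good v A e → good v B e)
    (step : ∀ M v (T : Finset α), f M ≤ #T → ∃ A ⊆ T, M ≤ #A ∧ ∃ e, good v A e)
    (m : ℕ) (S : Finset α) (hS : (fun M => f M + 1)^[2 * m] 0 ≤ #S) :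
    ∃ A ⊆ S, #A = m ∧ ∃ b, ∀ x ∈ A, good x {y ∈ A | x < y} b := by
  classical
  obtain ⟨X, hXS, hX, e, hXe⟩ := exists_endHomogeneous_subset good f anti step (2 * m) S hS
  obtain ⟨b, -, hb⟩ := exists_le_card_fiber_of_mul_le_card_of_maps_to (s := X) (f := e)
    (t := univ) (n := m) (fun _ _ => mem_univ _) univ_nonempty (by simp [hX])
  obtain ⟨A, hAX, hA⟩ := exists_subset_card_eq hb
  refine ⟨A, hAX.trans ((filter_subset _ _).trans hXS), hA, b, fun x hx => ?_⟩
  obtain ⟨hxX, rfl⟩ := mem_filter.1 (hAX hx)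
  exact anti _ _ _ _ (filter_subset_filter _ (hAX.trans (filter_subset _ _))) (hXe x hxX)

theorem exists_monochromatic_pairs (m : ℕ) : ∃ N, ∀ (c : α → α → Bool) (S : Finset α),
    N ≤ #S → ∃ A ⊆ S, #A = m ∧ ∃ b, ∀ x ∈ A, ∀ y ∈ A, x < y → c x y = b := by
  classical
  refine ⟨(fun M => 2 * M + 1)^[2 * m] 0, fun c S hS => ?_⟩
  have step : ∀ M v (T : Finset α), 2 * M ≤ #T → ∃ A ⊆ T, M ≤ #A ∧ ∃ e, ∀ y ∈ A, c v y = e :=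
    fun M v T hT => by
      obtain ⟨e, -, he⟩ := exists_le_card_fiber_of_mul_le_card_of_maps_to (s := T) (f := c v)
        (t := univ) (n := M) (fun _ _ => mem_univ _) univ_nonempty (by simpa using hT)
      exact ⟨_, filter_subset _ T, he, e, fun y hy => (mem_filter.1 hy).2⟩
  obtain ⟨A, hAS, hA, b, hb⟩ := exists_homogeneous_subset (fun v A e => ∀ y ∈ A, c v y = e)
    (fun M => 2 * M) (fun _ _ _ _ hBA h y hy => h y (hBA hy)) step m S hS
  exact ⟨A, hAS, hA, b, fun x hx y hy hxy => hb x hx y (mem_filter.2 ⟨hy, hxy⟩)⟩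

theorem exists_monochromatic_triples (m : ℕ) : ∃ N, ∀ (c : α → α → α → Bool) (S : Finset α),
    N ≤ #S → ∃ A ⊆ S, #A = m ∧
      ∃ b, ∀ x ∈ A, ∀ y ∈ A, ∀ z ∈ A, x < y → y < z → c x y z = b := by
  choose R hR using exists_monochromatic_pairs (α := α)
  refine ⟨(fun M => R M + 1)^[2 * m] 0, fun c S hS => ?_⟩
  have step : ∀ M v (T : Finset α), R M ≤ #T →
      ∃ A ⊆ T, M ≤ #A ∧ ∃ e, ∀ y ∈ A, ∀ z ∈ A, y < z → c v y z = e := fun M v T hT => by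
    obtain ⟨A, hAT, hA, e, he⟩ := hR M (c v) T hT
    exact ⟨A, hAT, hA.ge, e, he⟩
  obtain ⟨A, hAS, hA, b, hb⟩ := exists_homogeneous_subset
    (fun v A e => ∀ y ∈ A, ∀ z ∈ A, y < z → c v y z = e) R
    (fun _ _ _ _ hBA h y hy z hz => h y (hBA hy) z (hBA hz)) step m S hS
  exact ⟨A, hAS, hA, b, fun x hx y hy z hz hxy hyz =>
    hb x hx y (mem_filter.2 ⟨hy, hxy⟩) z (mem_filter.2 ⟨hz, hxy.trans hyz⟩) hyz⟩

end Ramsey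

theorem Finset.exists_strictMonoOn_mapsTo_Icc (A : Finset ℕ) :
    ∃ g : ℕ → ℕ, StrictMonoOn g (Set.Icc 1 #A) ∧ Set.MapsTo g (Set.Icc 1 #A) A := by
  have hf : (Set.ofPred (· ∈ A)).Finite := A.finite_toSet
  have hcard : #hf.toFinset = #A := by congr 1; ext; simp
  refine ⟨fun i => Nat.nth (· ∈ A) (i - 1), fun i hi j hj hij => ?_, fun i hi => ?_⟩
  · have := hi.1
    exact Nat.nth_lt_nth_of_lt_card hf (by omega) (by rw [hcard]; have := hj.2; omega)
  · exact Nat.nth_mem_of_lt_card hf (by rw [hcard]; have := hi.1; have := hi.2; omega)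

theorem Nat.testBit_log2_xor_of_lt {a b : ℕ} (h : a < b) :
    a.testBit (a ^^^ b).log2 = false ∧ b.testBit (a ^^^ b).log2 = true := by
  have hx : a ^^^ b ≠ 0 := by simpa using h.ne
  have hdiff : (a.testBit (a ^^^ b).log2 ^^ b.testBit (a ^^^ b).log2) = true := by
    simpa only [Nat.testBit_xor] using Nat.testBit_log2 hx
  have hhigh : ∀ j > (a ^^^ b).log2, b.testBit j = a.testBit j := fun j hj => Eq.symm <| by
    have := Nat.testBit_lt_two_pow (Nat.lt_log2_self.trans_le (Nat.pow_le_pow_right two_pos hj))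
    simpa [Nat.testBit_xor] using this
  cases ha : a.testBit (a ^^^ b).log2 <;> cases hb : b.testBit (a ^^^ b).log2 <;>
    rw [ha, hb] at hdiff
  · cases hdiff
  · exact ⟨rfl, rfl⟩
  · exact absurd (Nat.lt_of_testBit _ hb ha hhigh) h.not_gt
  · cases hdiff

theorem Nat.log2_xor_ne_of_lt_of_lt {a b c : ℕ} (hab : a < b) (hbc : b < c) :
    (a ^^^ b).log2 ≠ (b ^^^ c).log2 := fun h => by
  simpa [h, (Nat.testBit_log2_xor_of_lt hbc).1] using (Nat.testBit_log2_xor_of_lt hab).2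

theorem SimpleGraph.cliqueNum_eq_two {V : Type*} [Finite V] {G : SimpleGraph V}
    (h3 : G.CliqueFree 3) {u v : V} (huv : G.Adj u v) : G.cliqueNum = 2 := by
  refine le_antisymm ?_ ?_
  · obtain ⟨s, hs⟩ := G.exists_isNClique_cliqueNum
    by_contra! h
    exact h3.mono h s hs
  · classical
    have hclique : G.IsClique (({u, v} : Finset V) : Set V) := by
      rw [Finset.coe_pair]
      exact SimpleGraph.isClique_pair.2 fun _ => huv
    simpa [Finset.card_pair huv.ne] using hclique.card_le_cliqueNum

instance (k : ℕ) : Finite (EHVert k) :=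
  Set.Finite.to_subtype ((Set.finite_Iic (2 ^ k + 1, 2 ^ k + 1)).subset
    fun _ hp => Prod.mk_le_mk.2 ⟨hp.2.1.le.trans hp.2.2, hp.2.2⟩)

theorem EHVert.fst_mem_Icc {k : ℕ} (v : EHVert k) : v.1.1 ∈ Set.Icc 1 (2 ^ k + 1) :=
  ⟨v.2.1, v.2.2.1.le.trans v.2.2.2⟩

theorem EHVert.snd_mem_Icc {k : ℕ} (v : EHVert k) : v.1.2 ∈ Set.Icc 1 (2 ^ k + 1) :=
  ⟨v.2.1.trans v.2.2.1.le, v.2.2.2⟩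

namespace EHShift

theorem cliqueFree_three (k : ℕ) : (EHShift k).CliqueFree 3 := by
  classical
  intro s hs
  obtain ⟨⟨⟨a₁, a₂⟩, ha⟩, ⟨⟨b₁, b₂⟩, hb⟩, ⟨⟨c₁, c₂⟩, hc⟩, hab, hac, hbc, -⟩ :=
    SimpleGraph.is3Clique_iff.1 hs
  change _ ∨ _ at hab hac hbc
  dsimp only at ha hb hc hab hac hbc
  omega

theorem cliqueNum_eq (k : ℕ) (hk : 1 ≤ k) : (EHShift k).cliqueNum = 2 := by
  have : 2 ≤ 2 ^ k := Nat.le_self_pow (by omega) 2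
  exact SimpleGraph.cliqueNum_eq_two (cliqueFree_three k)
    (u := ⟨(1, 2), le_rfl, one_lt_two, by omega⟩) (v := ⟨(2, 3), one_le_two, by omega, by omega⟩)
    (Or.inl rfl)

theorem colorable (k : ℕ) : (EHShift k).Colorable (k + 1) := by
  have hlt : ∀ v : EHVert k, ((v.1.1 - 1) ^^^ (v.1.2 - 1)).log2 < k + 1 := fun v => by
    obtain ⟨h₁, h₂, h₃⟩ := v.2
    have : 2 ^ k < 2 ^ (k + 1) := Nat.pow_lt_pow_right one_lt_two k.lt_succ_self
    rw [Nat.log2_lt (by simpa using (by omega : v.1.1 - 1 ≠ v.1.2 - 1))]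
    exact Nat.xor_lt_two_pow (by omega) (by omega)
  have hne : ∀ u v : EHVert k, u.1.2 = v.1.1 →
      ((u.1.1 - 1) ^^^ (u.1.2 - 1)).log2 ≠ ((v.1.1 - 1) ^^^ (v.1.2 - 1)).log2 := fun u v h => by
    obtain ⟨hu₁, hu₂, -⟩ := u.2
    obtain ⟨-, hv₂, -⟩ := v.2
    rw [h]
    exact Nat.log2_xor_ne_of_lt_of_lt (by omega) (by omega)
  refine ⟨SimpleGraph.Coloring.mk (fun v => ⟨_, hlt v⟩) fun {u v} huv hcol => ?_⟩
  rcases huv with h | h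
  · exact hne u v h (Fin.mk.inj_iff.1 hcol)
  · exact hne v u h (Fin.mk.inj_iff.1 hcol).symm

/-- The colour of a vertex `(i, j)` lies among the colours of the vertices `(i, _)` but not among
those of the vertices `(j, _)`, all of which are its neighbours. -/
theorem two_pow_add_one_le_of_colorable {k c : ℕ} (hc : (EHShift k).Colorable c) :
    2 ^ k + 1 ≤ 2 ^ c := by
  obtain ⟨col⟩ := hc
  let F : Fin (2 ^ k + 1) → Set (Fin c) := fun i => col '' {v | v.1.1 = i + 1}
  have hF : Function.Injective F := by
    refine .of_lt_imp_ne fun i j hij hF => ?_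
    let v : EHVert k := ⟨(i + 1, j + 1), by omega, by simpa using hij, by omega⟩
    obtain ⟨w, hw, hcol⟩ : col v ∈ F j := hF ▸ ⟨v, rfl, rfl⟩
    exact col.valid (Or.inl hw.symm : (EHShift k).Adj v w) hcol.symm
  simpa [Fintype.card_set] using Fintype.card_le_of_injective F hF

theorem chromaticNumber_eq (k : ℕ) : (EHShift k).chromaticNumber = (k + 1 : ℕ) := by
  refine le_antisymm (colorable k).chromaticNumber_le
    (SimpleGraph.le_chromaticNumber_iff_colorable.2 fun c hc => ?_)
  have h := two_pow_add_one_le_of_colorable hc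
  exact_mod_cast (Nat.pow_lt_pow_iff_right one_lt_two).1 (Nat.lt_of_succ_le h)

def copyOfStrictMonoOn {k n : ℕ} (g : ℕ → ℕ) (hg : StrictMonoOn g (Set.Icc 1 (2 ^ k + 1)))
    (hmaps : Set.MapsTo g (Set.Icc 1 (2 ^ k + 1)) (Set.Icc 1 (2 ^ n + 1))) :
    (EHShift k).Copy (EHShift n) where
  toHom :=
    { toFun v := ⟨(g v.1.1, g v.1.2), (hmaps v.fst_mem_Icc).1,
        hg v.fst_mem_Icc v.snd_mem_Icc v.2.2.1, (hmaps v.snd_mem_Icc).2⟩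
      map_rel' h := h.imp (congrArg g) (congrArg g) }
  injective' u v h := by
    have h : (g u.1.1, g u.1.2) = (g v.1.1, g v.1.2) := congrArg Subtype.val h
    rw [Prod.mk.injEq] at h
    exact Subtype.ext (Prod.ext (hg.injOn u.fst_mem_Icc v.fst_mem_Icc h.1)
      (hg.injOn u.snd_mem_Icc v.snd_mem_Icc h.2))

theorem exists_proper_subgraph_iso (k : ℕ) :
    ∃ H : (EHShift (k + 1)).Subgraph, H ≠ ⊤ ∧ Nonempty (EHShift k ≃g H.coe) := by
  have hpow : 2 ^ k < 2 ^ (k + 1) := Nat.pow_lt_pow_right one_lt_two k.lt_succ_self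
  let f := copyOfStrictMonoOn (k := k) (n := k + 1) id strictMonoOn_id
    fun i hi => ⟨hi.1, hi.2.trans (by omega)⟩
  refine ⟨f.toSubgraph, fun htop => ?_, ⟨f.isoToSubgraph⟩⟩
  let w : EHVert (k + 1) := ⟨(1, 2 ^ (k + 1) + 1), le_rfl, by omega, le_rfl⟩
  obtain ⟨v, -, hv⟩ : w ∈ f.toSubgraph.verts := htop ▸ Set.mem_univ w
  have hv : v.1.2 = 2 ^ (k + 1) + 1 := congrArg (fun w : EHVert (k + 1) => w.1.2) hv
  have := v.2.2.2
  omega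

/-- The colour that `C` gives to the edge `(a, b) – (b, c)` of `G n`, read as a colouring of the
triples `a < b < c`. -/
def tripleColoring {n : ℕ} (C : Sym2 (EHVert n) → Bool) (a b c : ℕ) : Bool :=
  if h : 1 ≤ a ∧ a < b ∧ b < c ∧ c ≤ 2 ^ n + 1 then
    C s(⟨(a, b), h.1, h.2.1, by omega⟩, ⟨(b, c), by omega, h.2.2.1, h.2.2.2⟩)
  else false

theorem apply_eq_tripleColoring {n : ℕ} (C : Sym2 (EHVert n) → Bool) {u v : EHVert n}
    (h : u.1.2 = v.1.1) : C s(u, v) = tripleColoring C u.1.1 u.1.2 v.1.2 := by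
  obtain ⟨⟨a, b⟩, ha, hab, hb⟩ := u
  obtain ⟨⟨b', c⟩, hb', hbc, hc⟩ := v
  dsimp only at h ⊢
  subst h
  rw [tripleColoring, dif_pos ⟨ha, hab, hbc, hc⟩]

theorem hasMonoCopy_of_tripleColoring {k n : ℕ} (C : Sym2 (EHVert n) → Bool) (g : ℕ → ℕ)
    (hg : StrictMonoOn g (Set.Icc 1 (2 ^ k + 1)))
    (hmaps : Set.MapsTo g (Set.Icc 1 (2 ^ k + 1)) (Set.Icc 1 (2 ^ n + 1))) (b : Bool)
    (hb : ∀ i j l, 1 ≤ i → i < j → j < l → l ≤ 2 ^ k + 1 → tripleColoring C (g i) (g j) (g l) = b) :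
    HasMonoCopy (EHShift k) (EHShift n) C := by
  let f := copyOfStrictMonoOn g hg hmaps
  refine ⟨f, f.injective, fun _ _ => f.toHom.map_adj, b, fun u v huv => ?_⟩
  obtain ⟨hu₁, hu₂, hu₃⟩ := u.2
  obtain ⟨hv₁, hv₂, hv₃⟩ := v.2
  rcases huv with h | h
  · rw [apply_eq_tripleColoring C (u := f u) (v := f v) (congrArg g h)]
    exact hb _ _ _ hu₁ hu₂ (h ▸ hv₂) hv₃
  · rw [Sym2.eq_swap, apply_eq_tripleColoring C (u := f v) (v := f u) (congrArg g h)]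
    exact hb _ _ _ hv₁ hv₂ (h ▸ hu₂) hu₃

theorem exists_hasMonoCopy (k : ℕ) :
    ∃ n : ℕ, n > k ∧ ∀ C : Sym2 (EHVert n) → Bool, HasMonoCopy (EHShift k) (EHShift n) C := by
  obtain ⟨N, hN⟩ := exists_monochromatic_triples (α := ℕ) (2 ^ k + 1)
  refine ⟨max (k + 1) N, by omega, fun C => ?_⟩
  have hS : N ≤ #(Icc 1 (2 ^ max (k + 1) N + 1)) := by
    have := (max (k + 1) N).lt_two_pow_self
    simp only [Nat.card_Icc]
    omega
  obtain ⟨A, hAS, hA, b, hb⟩ := hN (tripleColoring C) _ hS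
  obtain ⟨g, hg, hgA⟩ := A.exists_strictMonoOn_mapsTo_Icc
  rw [hA] at hg hgA
  have hmem : ∀ i ∈ Set.Icc 1 (2 ^ k + 1), g i ∈ A := hgA
  refine hasMonoCopy_of_tripleColoring C g hg (fun i hi => by simpa using hAS (hmem i hi)) b
    fun i j l hi hij hjl hl => hb _ (hmem i ⟨hi, by omega⟩) _ (hmem j ⟨by omega, by omega⟩) _
      (hmem l ⟨by omega, hl⟩) (hg ⟨hi, by omega⟩ ⟨by omega, by omega⟩ hij)
      (hg ⟨by omega, by omega⟩ ⟨by omega, hl⟩ hjl)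

end EHShift

/-- The Erdős–Hajnal shift graphs form an ascending Ramsey sequence with bounded clique numbers
(`ω(G k) = 2`) and chromatic numbers tending to infinity (`χ(G k) = k + 1`): for every positive
integer `k`, `G k` is isomorphic to a proper subgraph of `G (k + 1)`; `ω(G k) = 2`;
`χ(G k) = k + 1`; and there is `n > k` such that every red-blue edge coloring of `G n`
contains a monochromatic subgraph isomorphic to `G k`. -/
theorem ehShift_solution_of_open_problem :
    ∀ k : ℕ, 1 ≤ k →
      (∃ H : (EHShift (k + 1)).Subgraph, H ≠ ⊤ ∧ Nonempty (EHShift k ≃g H.coe)) ∧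
      (EHShift k).cliqueNum = 2 ∧
      (EHShift k).chromaticNumber = (k + 1 : ℕ) ∧
      ∃ n : ℕ, n > k ∧
        ∀ C : Sym2 (EHVert n) → Bool, HasMonoCopy (EHShift k) (EHShift n) C := fun k hk =>
  ⟨EHShift.exists_proper_subgraph_iso k, EHShift.cliqueNum_eq k hk, EHShift.chromaticNumber_eq k,
    EHShift.exists_hasMonoCopy k⟩
end

section
/- Let {G_k} be a Ramsey sequence of graphs. Then either every graph G_k in the sequence is bipartite, or the chromatic numbers χ(G_k) tend to infinity as k → ∞ (equivalently, the chromatic numbers of the G_k are unbounded). -/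
namespace SimpleGraph

variable {V W : Type*} {G : SimpleGraph V} {H : SimpleGraph W}

lemma colorable_or_colorable_of_forall_hasMonoCopy {s t : ℕ}
    (h : ∀ C : Sym2 W → Bool, HasMonoCopy G H C) (hH : H.Colorable (s * t)) :
    G.Colorable s ∨ G.Colorable t := by
  obtain ⟨c⟩ := hH
  let d : W → Fin s × Fin t := fun w => finProdFinEquiv.symm (c w)
  have hd : ∀ {u v}, H.Adj u v → d u ≠ d v :=
    fun huv heq => c.valid huv (finProdFinEquiv.symm.injective heq)
  let sameFirst : Sym2 W → Bool :=
    Sym2.lift ⟨fun u v => decide ((d u).1 = (d v).1), fun u v => by simp only [eq_comm]⟩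
  obtain ⟨f, -, hf, b, hb⟩ := h sameFirst
  cases b
  · exact .inl ⟨.mk (fun v => (d (f v)).1) fun huv heq => by
      simpa [sameFirst, heq] using hb _ _ huv⟩
  · exact .inr ⟨.mk (fun v => (d (f v)).2) fun huv heq =>
      hd (hf _ _ huv) (Prod.ext (by simpa [sameFirst] using hb _ _ huv) heq)⟩

lemma lt_chromaticNumber_of_not_colorable {n : ℕ} (hG : ¬ G.Colorable n) :
    (n : ℕ∞) < G.chromaticNumber :=
  not_le.mp (chromaticNumber_le_iff_colorable.not.mpr hG)

end SimpleGraph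

open SimpleGraph

lemma exists_not_colorable_two_pow_two_pow {V : ℕ → Type*} {G : ∀ k, SimpleGraph (V k)}
    (hram : ∀ k, ∃ n, ∀ C : Sym2 (V n) → Bool, HasMonoCopy (G k) (G n) C)
    {k₀ : ℕ} (hk₀ : ¬ (G k₀).Colorable 2) (j : ℕ) : ∃ k, ¬ (G k).Colorable (2 ^ 2 ^ j) := by
  induction j with
  | zero => exact ⟨k₀, hk₀⟩
  | succ j ih =>
    obtain ⟨k, hk⟩ := ih
    obtain ⟨n, hmono⟩ := hram k
    refine ⟨n, fun hn => hk ?_⟩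
    rw [pow_succ, pow_mul, sq] at hn
    exact (colorable_or_colorable_of_forall_hasMonoCopy hmono hn).elim id id

theorem ramsey_sequence_bipartite_or_unbounded_chromatic_general {V : ℕ → Type}
    (G : ∀ k, SimpleGraph (V k))
    (hram : ∀ k, ∃ n, n > k ∧ ∀ C : Sym2 (V n) → Bool, HasMonoCopy (G k) (G n) C) :
    (∀ k, (G k).Colorable 2) ∨ (∀ m : ℕ, ∃ k, (m : ℕ∞) ≤ (G k).chromaticNumber) := by
  refine or_iff_not_imp_left.mpr fun hbip m => ?_
  obtain ⟨k₀, hk₀⟩ := not_forall.mp hbip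
  obtain ⟨k, hk⟩ := exists_not_colorable_two_pow_two_pow
    (fun k => (hram k).imp fun _ => And.right) hk₀ m
  have hm : m ≤ 2 ^ 2 ^ m :=
    (Nat.lt_two_pow_self.trans (Nat.pow_lt_pow_right one_lt_two Nat.lt_two_pow_self)).le
  exact ⟨k, (Nat.cast_le.mpr hm).trans (lt_chromaticNumber_of_not_colorable hk).le⟩

/-- If `{G k}` is a Ramsey sequence (an ascending sequence of finite graphs such that for every
`k` there is `n > k` with every red-blue edge coloring of `G n` containing a monochromatic
subgraph isomorphic to `G k`), then either every `G k` is bipartite, or the chromatic numbers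
of the `G k` are unbounded. -/
theorem ramsey_sequence_bipartite_or_unbounded_chromatic {V : ℕ → Type} [∀ k, Fintype (V k)]
    (G : ∀ k, SimpleGraph (V k))
    (hasc : ∀ k, ∃ H : (G (k + 1)).Subgraph, H ≠ ⊤ ∧ Nonempty (G k ≃g H.coe))
    (hram : ∀ k, ∃ n, n > k ∧ ∀ C : Sym2 (V n) → Bool, HasMonoCopy (G k) (G n) C) :
    (∀ k, (G k).Colorable 2) ∨ (∀ m : ℕ, ∃ k, (m : ℕ∞) ≤ (G k).chromaticNumber) :=
  ramsey_sequence_bipartite_or_unbounded_chromatic_general G hram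
end

section
/- Let {G_k} be an ascending sequence of graphs for which the clique numbers tend to infinity, i.e., lim_{k→∞} ω(G_k) = ∞ (equivalently, for every m there exists k such that G_k contains a clique of size m). Then {G_k} is a Ramsey sequence: for every k there exists n > k such that every 2-coloring (red/blue) of the edges of G_n contains a monochromatic subgraph isomorphic to G_k. -/
/-! Some `G j` contains a clique on `R` vertices, where `R` is the Ramsey number for
monochromatic cliques on `|V(G k)|` vertices, and the ascending chain carries this clique into
every later `G n`. Any 2-colouring of `G n` therefore has a monochromatic clique on
`|V(G k)|` vertices, and `G k` embeds into it. -/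

open Finset SimpleGraph

lemma Set.Pairwise.insert_of_color {α : Type*} [DecidableEq α] {C : Sym2 α → Bool}
    {t : Finset α} {x : α} {c : Bool} (hx : x ∉ t)
    (ht : (t : Set α).Pairwise fun u v => C s(u, v) = c) (hxt : ∀ y ∈ t, C s(x, y) = c) :
    ((insert x t : Finset α) : Set α).Pairwise fun u v => C s(u, v) = c := by
  rw [coe_insert]
  exact ht.insert_of_notMem (mod_cast hx) fun y hy => ⟨hxt y hy, Sym2.eq_swap ▸ hxt y hy⟩

theorem exists_monochromatic_subset (n : Bool → ℕ) :
    ∃ R, ∀ {α : Type*} (s : Finset α) (C : Sym2 α → Bool), R ≤ #s →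
      ∃ c, ∃ t ⊆ s, n c ≤ #t ∧ (t : Set α).Pairwise fun u v => C s(u, v) = c := by
  induction hm : n true + n false generalizing n with
  | zero => exact ⟨0, fun s C _ => ⟨true, ∅, empty_subset s, by omega, by simp⟩⟩
  | succ m ih =>
    by_cases hzero : ∃ c, n c = 0
    · obtain ⟨c, hc⟩ := hzero
      exact ⟨0, fun s C _ => ⟨c, ∅, empty_subset s, by omega, by simp⟩⟩
    simp only [not_exists] at hzero
    have hsmaller : ∀ c, ∃ R, _ := fun c =>
      ih (Function.update n c (n c - 1)) (by cases c <;> simp [Function.update] <;> grind)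
    choose R hR using hsmaller
    refine ⟨R true + R false + 1, fun {α} s C hs => ?_⟩
    classical
    obtain ⟨x, hx⟩ : s.Nonempty := card_pos.mp (by omega)
    -- split the other vertices by the colour of their edge to `x`
    set A : Bool → Finset α := fun c => (s.erase x).filter fun y => C s(x, y) = c
    have hA : ∃ c, R c ≤ #(A c) := by
      have := card_filter_add_card_filter_not (s := s.erase x) (fun y => C s(x, y) = true)
      rw [card_erase_of_mem hx] at this
      by_contra! h
      simp only [A, Bool.not_eq_true] at h this
      have := h true; have := h false
      omega
    obtain ⟨c, hc⟩ := hA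
    obtain ⟨c', t, htA, hnt, ht⟩ := hR c (A c) C hc
    have hts : t ⊆ s := htA.trans ((filter_subset _ _).trans (erase_subset x s))
    by_cases hcc : c' = c
    · subst hcc
      have hxt : x ∉ t := fun h => by simpa using (mem_filter.mp (htA h)).1
      refine ⟨c', insert x t, insert_subset hx hts, ?_, ht.insert_of_color hxt ?_⟩
      · simp only [Function.update_self] at hnt
        rw [card_insert_of_notMem hxt]; omega
      · exact fun y hy => (mem_filter.mp (htA hy)).2
    · exact ⟨c', t, hts, by simpa [Function.update_of_ne hcc] using hnt, ht⟩

namespace SimpleGraph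

variable {V W : Type*}

def colorGraph (H : SimpleGraph W) (C : Sym2 W → Bool) (c : Bool) : SimpleGraph W where
  Adj u v := H.Adj u v ∧ C s(u, v) = c
  symm := ⟨fun _ _ h => ⟨h.1.symm, Sym2.eq_swap ▸ h.2⟩⟩
  loopless := ⟨fun u h => H.loopless.irrefl u h.1⟩

@[simp]
lemma colorGraph_adj {H : SimpleGraph W} {C : Sym2 W → Bool} {c : Bool} {u v : W} :
    (H.colorGraph C c).Adj u v ↔ H.Adj u v ∧ C s(u, v) = c :=
  Iff.rfl

lemma hasMonoCopy_of_isContained_colorGraph {G : SimpleGraph V} {H : SimpleGraph W}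
    {C : Sym2 W → Bool} {c : Bool} (h : G ⊑ H.colorGraph C c) : HasMonoCopy G H C :=
  let ⟨f⟩ := h
  ⟨f, f.injective, fun _ _ huv => (colorGraph_adj.mp (f.toHom.map_adj huv)).1, c,
    fun _ _ huv => (colorGraph_adj.mp (f.toHom.map_adj huv)).2⟩

lemma isContained_of_isClique [Fintype V] (G : SimpleGraph V) {H : SimpleGraph W}
    {t : Finset W} (ht : H.IsClique (t : Set W)) (hcard : Fintype.card V ≤ #t) : G ⊑ H := by
  have hGt : G ⊑ completeGraph (t : Set W) :=
    isContained_top_iff.mpr (Function.Embedding.nonempty_of_card_le (by simpa using hcard))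
  have htH : completeGraph (t : Set W) ⊑ H := by
    simpa [induce_eq_top.mpr ht] using (Copy.induce H (t : Set W)).isContained
  exact hGt.trans htH

lemma isContained_of_isContained_succ {V : ℕ → Type*} {G : ∀ k, SimpleGraph (V k)}
    (hstep : ∀ k, G k ⊑ G (k + 1)) {k n : ℕ} (hkn : k ≤ n) : G k ⊑ G n := by
  induction n, hkn using Nat.le_induction with
  | base => exact .rfl
  | succ n _ ih => exact ih.trans (hstep n)

end SimpleGraph

/-- If `{G k}` is an ascending sequence of finite graphs whose clique numbers tend to infinity
(for every `m` some `G k` contains a clique of size `m`), then `{G k}` is a Ramsey sequence. -/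
theorem ramsey_of_clique_unbounded {V : ℕ → Type} [∀ k, Fintype (V k)]
    (G : ∀ k, SimpleGraph (V k))
    (hasc : ∀ k, ∃ H : (G (k + 1)).Subgraph, H ≠ ⊤ ∧ Nonempty (G k ≃g H.coe))
    (hclique : ∀ m : ℕ, ∃ k, ∃ s : Finset (V k), (G k).IsNClique m s) :
    ∀ k, ∃ n, n > k ∧ ∀ C : Sym2 (V n) → Bool, HasMonoCopy (G k) (G n) C := by
  intro k
  have hstep (i : ℕ) : G i ⊑ G (i + 1) :=
    let ⟨H, _, ⟨e⟩⟩ := hasc i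
    e.isContained.trans H.coe_isContained
  obtain ⟨R, hR⟩ := exists_monochromatic_subset fun _ => Fintype.card (V k)
  obtain ⟨j, s, hs⟩ := hclique R
  have hjn := isContained_of_isContained_succ hstep (le_max_right (k + 1) j)
  obtain ⟨t, ht⟩ : ∃ t, (G (max (k + 1) j)).IsNClique R t := by
    simpa [CliqueFree] using fun h : (G _).CliqueFree R => hs.not_cliqueFree (h.comap hjn)
  refine ⟨max (k + 1) j, by omega, fun C => ?_⟩
  obtain ⟨c, u, hut, hcard, hcolor⟩ := hR t C ht.card_eq.ge
  have hu : ((G _).colorGraph C c).IsClique (u : Set _) :=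
    fun _ hx _ hy hxy => colorGraph_adj.mpr ⟨ht.isClique (hut hx) (hut hy) hxy, hcolor hx hy hxy⟩
  exact hasMonoCopy_of_isContained_colorGraph (isContained_of_isClique (G k) hu hcard)
end
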